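/- arXiv:2401.01533 — 5 statements merged into one kernel-verified Lean document; each statement's English description precedes it below -/
import Mathlib

section
/- Let (X,f,R) be a twisted Yang-Baxter set, i.e., (X,R) is a set-theoretic Yang-Baxter solution and f: X → X is a bijection with (f×f)∘R = R∘(f×f). Define TR: X×X → X×X by TR(x,y) = (R_1(x, f(y)), R_2(f⁻¹(x), y)). Then TR satisfies the set-theoretic Yang-Baxter equation: (TR×id)(id×TR)(TR×id) = (id×TR)(TR×id)(id×TR). -/
namespace TwistedYB

variable {X : Type*}

/-- `R` acting on the first two factors of `X × X × X`. -/
def Rxx (R : X × X → X × X) : X × X × X → X × X × X :=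
  fun p => ((R (p.1, p.2.1)).1, (R (p.1, p.2.1)).2, p.2.2)

/-- `R` acting on the last two factors of `X × X × X`. -/
def xxR (R : X × X → X × X) : X × X × X → X × X × X :=
  fun p => (p.1, (R (p.2.1, p.2.2)).1, (R (p.2.1, p.2.2)).2)

/-- The set-theoretic Yang-Baxter equation. -/
def YBE (R : X × X → X × X) : Prop :=
  Rxx R ∘ xxR R ∘ Rxx R = xxR R ∘ Rxx R ∘ xxR R

/-- `f` commutes with `R`, i.e. `(f × f) ∘ R = R ∘ (f × f)`. -/
def CommutesWith (f : X → X) (R : X × X → X × X) : Prop :=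
  ∀ p : X × X, R (f p.1, f p.2) = (f (R p).1, f (R p).2)

/-- The twisted operator `TR(x,y) = (R₁(x, f y), R₂(f⁻¹ x, y))`. -/
def TR (f : X ≃ X) (R : X × X → X × X) : X × X → X × X :=
  fun p => ((R (p.1, f p.2)).1, (R (f.symm p.1, p.2)).2)

theorem TR_satisfies_YBE (R : X × X → X × X) (f : X ≃ X)
    (hbij : Function.Bijective R) (hYB : YBE R) (hcomm : CommutesWith f R) :
    YBE (TR f R) := by
  -- TR (x, y) = ((R (x, f y)).1, f.symm (R (x, f y)).2)
  have hTR : ∀ x y : X, TR f R (x, y) = ((R (x, f y)).1, f.symm (R (x, f y)).2) := by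
    intro x y
    have h := hcomm (f.symm x, y)
    simp only [Equiv.apply_symm_apply] at h
    simp [TR, h]
  -- conjugating maps
  set φ : X × X × X → X × X × X :=
    fun p => (p.1, f.symm p.2.1, f.symm (f.symm p.2.2)) with hφ
  set ψ : X × X × X → X × X × X :=
    fun p => (p.1, f p.2.1, f (f p.2.2)) with hψ
  have hψφ : ∀ q, ψ (φ q) = q := by intro q; simp [hφ, hψ]
  have h1 : Rxx (TR f R) = φ ∘ Rxx R ∘ ψ := by
    funext p
    simp [Rxx, hTR, hφ, hψ, Function.comp]
  have h2 : xxR (TR f R) = φ ∘ xxR R ∘ ψ := by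
    funext p
    have h := hcomm (p.2.1, f p.2.2)
    simp only [] at h
    simp [xxR, hTR, hφ, hψ, Function.comp, h]
  unfold YBE at hYB ⊢
  rw [h1, h2]
  funext p
  simp only [Function.comp_apply, hψφ]
  have := congrFun hYB (ψ p)
  simp only [Function.comp_apply] at this
  rw [this]

end TwistedYB
end

section
/- Let (X,f,R) be a twisted Yang-Baxter set and, for an integer t, define T^tR(x,y) = (R_1(x, f^t(y)), R_2(f^{-t}(x), y)). Then (X, f, T^tR) is again a twisted Yang-Baxter set; in particular T^tR satisfies the set-theoretic Yang-Baxter equation and (f×f)∘T^tR = T^tR∘(f×f). -/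
/-!
Put `g = f ^ t`. Since `g × g` commutes with `R`, `R₁(x, g y) = g R₁(g⁻¹ x, y)`, so
`T^tR = (g × id) ∘ R ∘ (g⁻¹ × id)`. Conjugating by `Φ = g² × g × id` on `X³` carries `R₁₂` to
`(T^tR)₁₂` and `R₂₃` to `(T^tR)₂₃`, so the Yang-Baxter equation transfers from `R` to `T^tR`;
and `f`, commuting with both `R` and `g`, commutes with the conjugate.
-/

namespace TwistedYB

variable {X : Type*}

/-- The `t`-twisted operator `T^tR(x,y) = (R₁(x, f^t y), R₂(f^{-t} x, y))`. -/
def TtR (f : Equiv.Perm X) (R : X × X → X × X) (t : ℤ) : X × X → X × X :=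
  fun p => ((R (p.1, (f ^ t) p.2)).1, (R ((f ^ (-t)) p.1, p.2)).2)

def commutingPerms (R : X × X → X × X) : Subgroup (Equiv.Perm X) where
  carrier := {g | CommutesWith g R}
  one_mem' _ := rfl
  mul_mem' {g h} hg hh p := by
    have hgh := hg (h p.1, h p.2)
    simp only at hgh
    simp only [Equiv.Perm.mul_apply, hgh, hh p]
  inv_mem' {g} hg p := by
    have h := hg (g⁻¹ p.1, g⁻¹ p.2)
    simp only [Equiv.Perm.coe_inv, Equiv.apply_symm_apply] at h
    simp [h]

theorem commutesWith_zpow {f : Equiv.Perm X} {R : X × X → X × X} (hf : CommutesWith f R)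
    (n : ℤ) : CommutesWith (f ^ n) R :=
  (commutingPerms R).zpow_mem (show f ∈ commutingPerms R from hf) n

/-- `(g × id) ∘ R ∘ (g⁻¹ × id)`. -/
def conjFst (g : Equiv.Perm X) (R : X × X → X × X) : X × X → X × X :=
  fun p => (g (R (g⁻¹ p.1, p.2)).1, (R (g⁻¹ p.1, p.2)).2)

theorem TtR_eq_conjFst {f : Equiv.Perm X} {R : X × X → X × X} {t : ℤ}
    (ht : CommutesWith (f ^ t) R) : TtR f R t = conjFst (f ^ t) R := by
  funext ⟨x, y⟩
  have h := ht ((f ^ t)⁻¹ x, y)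
  simp only [Equiv.Perm.coe_inv, Equiv.apply_symm_apply] at h
  simp [TtR, conjFst, h, zpow_neg]

theorem YBE.of_semiconj {R S : X × X → X × X} {Φ : X × X × X → X × X × X}
    (hΦ : Function.Surjective Φ) (h₁₂ : Function.Semiconj Φ (Rxx R) (Rxx S))
    (h₂₃ : Function.Semiconj Φ (xxR R) (xxR S)) (hR : YBE R) : YBE S := by
  apply hΦ.injective_comp_right
  calc Rxx S ∘ xxR S ∘ Rxx S ∘ Φ = Φ ∘ Rxx R ∘ xxR R ∘ Rxx R :=
        (h₁₂.comp_right (h₂₃.comp_right h₁₂)).comp_eq.symm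
    _ = Φ ∘ xxR R ∘ Rxx R ∘ xxR R := congrArg (Φ ∘ ·) hR
    _ = xxR S ∘ Rxx S ∘ xxR S ∘ Φ := (h₂₃.comp_right (h₁₂.comp_right h₂₃)).comp_eq

section conjFst

variable {g : Equiv.Perm X} {R : X × X → X × X}

def tripleConj (g : Equiv.Perm X) : X × X × X → X × X × X :=
  Prod.map (g * g) (Prod.map g id)

theorem tripleConj_surjective : Function.Surjective (tripleConj g) :=
  Function.Surjective.prodMap (g * g).surjective
    (Function.Surjective.prodMap g.surjective Function.surjective_id)

theorem semiconj_Rxx_conjFst (hg : CommutesWith g R) :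
    Function.Semiconj (tripleConj g) (Rxx R) (Rxx (conjFst g R)) := by
  rintro ⟨x, y, z⟩
  have h := hg (x, y)
  simp only at h
  simp [tripleConj, Rxx, conjFst, h]

theorem semiconj_xxR_conjFst :
    Function.Semiconj (tripleConj g) (xxR R) (xxR (conjFst g R)) := by
  rintro ⟨x, y, z⟩
  simp only [tripleConj, xxR, conjFst, Prod.map_apply, id_eq, Equiv.Perm.coe_inv,
    Equiv.symm_apply_apply]

theorem YBE.conjFst (hg : CommutesWith g R) (hR : YBE R) : YBE (conjFst g R) :=
  hR.of_semiconj tripleConj_surjective (semiconj_Rxx_conjFst hg) semiconj_xxR_conjFst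

theorem CommutesWith.conjFst {f : Equiv.Perm X} (hf : CommutesWith f R) (hfg : Commute f g) :
    CommutesWith f (conjFst g R) := by
  rintro ⟨x, y⟩
  have hx : g⁻¹ (f x) = f (g⁻¹ x) := (DFunLike.congr_fun hfg.inv_right.eq x).symm
  have h := hf (g⁻¹ x, y)
  simp only at h
  simp only [TwistedYB.conjFst]
  rw [hx, h, ← Equiv.Perm.mul_apply, ← hfg.eq, Equiv.Perm.mul_apply]

end conjFst

theorem TtR_twisted_YB_general (R : X × X → X × X) (f : Equiv.Perm X) (t : ℤ)
    (hYB : YBE R) (hcomm : CommutesWith f R) :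
    YBE (TtR f R t) ∧ CommutesWith f (TtR f R t) := by
  have ht := commutesWith_zpow hcomm t
  rw [TtR_eq_conjFst ht]
  exact ⟨hYB.conjFst ht, hcomm.conjFst ((Commute.refl f).zpow_right t)⟩

theorem TtR_twisted_YB (R : X × X → X × X) (f : Equiv.Perm X) (t : ℤ)
    (hbij : Function.Bijective R) (hYB : YBE R) (hcomm : CommutesWith f R) :
    YBE (TtR f R t) ∧ CommutesWith f (TtR f R t) :=
  TtR_twisted_YB_general R f t hYB hcomm

end TwistedYB
end

section
/- Let (X,f,R) be a twisted birack (i.e., (X,R) is a birack and f is an automorphism of (X,R)). Then (X, TR) is a birack, where TR(x,y) = (R_1(x,f(y)), R_2(f⁻¹(x),y)). That is, TR satisfies the Yang-Baxter equation, its first component is left-invertible (for all x,z there is a unique y with TR_1(x,y)=z) and its second component is right-invertible (for all y,w there is a unique x with TR_2(x,y)=w). -/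
namespace TwistedYB

variable {X : Type*}

/-- The first component of a birack is left-invertible. -/
def LeftInvertible (R : X × X → X × X) : Prop :=
  ∀ x z : X, ∃! y : X, (R (x, y)).1 = z

/-- The second component of a birack is right-invertible. -/
def RightInvertible (R : X × X → X × X) : Prop :=
  ∀ y w : X, ∃! x : X, (R (x, y)).2 = w

/-- The type I condition of a biquandle. -/
def TypeI (R : X × X → X × X) : Prop :=
  ∀ a : X, ∃! x : X, R (x, a) = (x, a)

theorem TR_is_birack (R : X × X → X × X) (f : X ≃ X)
    (hbij : Function.Bijective R) (hYB : YBE R)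
    (hli : LeftInvertible R) (hri : RightInvertible R)
    (hcomm : CommutesWith f R) :
    Function.Bijective (TR f R) ∧ YBE (TR f R) ∧
      LeftInvertible (TR f R) ∧ RightInvertible (TR f R) := by
  -- key consequence of commutation
  have hc : ∀ x y : X, R (x, f y) = (f (R (f.symm x, y)).1, f (R (f.symm x, y)).2) := by
    intro x y
    have h := hcomm (f.symm x, y)
    simpa using h
  have hform : ∀ x y : X,
      TR f R (x, y) = (f (R (f.symm x, y)).1, (R (f.symm x, y)).2) := by
    intro x y
    simp only [TR]
    rw [hc x y]
  have hform2 : ∀ x y : X,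
      TR f R (x, y) = ((R (x, f y)).1, f.symm (R (x, f y)).2) := by
    intro x y
    simp only [TR]
    rw [hc x y]
    simp
  -- TR = G ∘ R ∘ G.symm with G = f × id
  have hconj : TR f R = fun p : X × X => (f (R (f.symm p.1, p.2)).1, (R (f.symm p.1, p.2)).2) := by
    funext p
    exact hform p.1 p.2
  constructor
  · -- bijectivity
    rw [hconj]
    have : (fun p : X × X => (f (R (f.symm p.1, p.2)).1, (R (f.symm p.1, p.2)).2)) =
        (fun q : X × X => (f q.1, q.2)) ∘ R ∘ (fun p : X × X => (f.symm p.1, p.2)) := rfl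
    rw [this]
    have h1 : Function.Bijective (fun q : X × X => (f q.1, q.2)) :=
      (f.prodCongr (Equiv.refl X)).bijective
    have h2 : Function.Bijective (fun p : X × X => (f.symm p.1, p.2)) :=
      (f.symm.prodCongr (Equiv.refl X)).bijective
    exact h1.comp (hbij.comp h2)
  refine ⟨?_, ?_, ?_⟩
  · -- YBE
    set F : X × X × X → X × X × X := fun p => (f p.1, p.2.1, f.symm p.2.2) with hF
    set Finv : X × X × X → X × X × X := fun p => (f.symm p.1, p.2.1, f p.2.2) with hFinv
    have hFi : Finv ∘ F = id := by
      funext p; simp [hF, hFinv]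
    have hFi' : F ∘ Finv = id := by
      funext p; simp [hF, hFinv]
    have hR1 : Rxx (TR f R) = F ∘ Rxx R ∘ Finv := by
      funext p
      obtain ⟨x, y, z⟩ := p
      simp only [Rxx, Function.comp_apply, hF, hFinv]
      rw [hform x y]
      simp
    have hR2 : xxR (TR f R) = F ∘ xxR R ∘ Finv := by
      funext p
      obtain ⟨x, y, z⟩ := p
      simp only [xxR, Function.comp_apply, hF, hFinv]
      rw [hform2 y z]
      simp
    have hcancel : ∀ A B C : X × X × X → X × X × X,
        (F ∘ A ∘ Finv) ∘ (F ∘ B ∘ Finv) ∘ (F ∘ C ∘ Finv) = F ∘ (A ∘ B ∘ C) ∘ Finv := by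
      intro A B C
      funext p
      simp [hF, hFinv, Function.comp_apply]
    unfold YBE
    rw [hR1, hR2, hcancel, hcancel, hYB]
  · -- left invertible
    intro x z
    obtain ⟨y', hy', huniq⟩ := hli x z
    refine ⟨f.symm y', ?_, ?_⟩
    · simp only [TR]
      simpa using hy'
    · intro y hy
      simp only [TR] at hy
      have := huniq (f y) hy
      simp [← this]
  · -- right invertible
    intro y w
    obtain ⟨x', hx', huniq⟩ := hri y w
    refine ⟨f x', ?_, ?_⟩
    · simp only [TR]
      simpa using hx'
    · intro x hx
      simp only [TR] at hx
      have := huniq (f.symm x) hx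
      simp [← this]

end TwistedYB
end

section
/- Let (X,f,R) be a twisted biquandle, i.e., (X,R) is a biquandle and f: X → X is a bijection with (f×f)∘R = R∘(f×f). Then (X, TR), where TR(x,y) = (R_1(x,f(y)), R_2(f⁻¹(x),y)), is a biquandle: TR satisfies the Yang-Baxter equation, is a birack, and for every a ∈ X there is a unique x ∈ X with TR(x,a) = (x,a). -/
namespace TwistedYB

variable {X : Type*}

theorem TR_is_biquandle (R : X × X → X × X) (f : X ≃ X)
    (hbij : Function.Bijective R) (hYB : YBE R)
    (hli : LeftInvertible R) (hri : RightInvertible R) (hI : TypeI R)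
    (hcomm : CommutesWith f R) :
    Function.Bijective (TR f R) ∧ YBE (TR f R) ∧
      LeftInvertible (TR f R) ∧ RightInvertible (TR f R) ∧ TypeI (TR f R) := by
  -- componentwise commutation
  have hc1 : ∀ x y : X, (R (f x, f y)).1 = f (R (x, y)).1 := fun x y => by
    have := hcomm (x, y); exact congrArg Prod.fst this
  have hc2 : ∀ x y : X, (R (f x, f y)).2 = f (R (x, y)).2 := fun x y => by
    have := hcomm (x, y); exact congrArg Prod.snd this
  have e1 : ∀ x y : X, (R (x, f y)).1 = f (R (f.symm x, y)).1 := fun x y => by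
    have := hc1 (f.symm x) y; simpa using this
  have e2 : ∀ x y : X, (R (x, f y)).2 = f (R (f.symm x, y)).2 := fun x y => by
    have := hc2 (f.symm x) y; simpa using this
  -- TR as a conjugate of R
  have hTR : TR f R = (Prod.map f id) ∘ R ∘ (Prod.map f.symm id) := by
    funext p
    simp only [TR, Function.comp_apply, Prod.map, id]
    refine Prod.ext ?_ ?_
    · exact e1 p.1 p.2
    · rfl
  have hTRp : ∀ x y : X, TR f R (x, y) = (f (R (f.symm x, y)).1, (R (f.symm x, y)).2) := by
    intro x y
    rw [hTR]; rfl
  constructor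
  · rw [hTR]
    exact ((Equiv.prodCongr f (Equiv.refl X)).bijective.comp hbij).comp
      (Equiv.prodCongr f.symm (Equiv.refl X)).bijective
  refine ⟨?_, ?_, ?_, ?_⟩
  · -- Yang–Baxter
    set Φ : X × X × X → X × X × X := fun p => (f (f p.1), f p.2.1, p.2.2) with hΦ
    set Ψ : X × X × X → X × X × X := fun p => (f.symm (f.symm p.1), f.symm p.2.1, p.2.2)
      with hΨ
    have hΨΦ : ∀ p, Ψ (Φ p) = p := by intro p; simp [hΦ, hΨ]
    have hA : ∀ p, Rxx (TR f R) p = Φ (Rxx R (Ψ p)) := by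
      intro p
      obtain ⟨a, b, c⟩ := p
      simp only [Rxx, TR, hΦ, hΨ]
      refine Prod.ext ?_ (Prod.ext ?_ rfl)
      · -- (R (a, f b)).1 = f (f (R (f⁻¹⁻¹ a... )).1)
        have h1 := e1 a b
        have h2 := e1 (f.symm a) (f.symm b)
        simp only [Equiv.apply_symm_apply] at h2
        simp only [h1, h2]
      · have h2 := e2 (f.symm a) (f.symm b)
        simp only [Equiv.apply_symm_apply] at h2
        simp only [h2]
    have hB : ∀ p, xxR (TR f R) p = Φ (xxR R (Ψ p)) := by
      intro p
      obtain ⟨a, b, c⟩ := p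
      simp only [xxR, TR, hΦ, hΨ]
      refine Prod.ext ?_ (Prod.ext ?_ ?_)
      · simp
      · exact e1 b c
      · rfl
    have hY := fun q => congrFun hYB q
    simp only [Function.comp_apply] at hY
    show Rxx (TR f R) ∘ xxR (TR f R) ∘ Rxx (TR f R)
        = xxR (TR f R) ∘ Rxx (TR f R) ∘ xxR (TR f R)
    funext p
    simp only [Function.comp_apply, hA, hB, hΨΦ]
    rw [hY (Ψ p)]
  · -- left invertibility
    intro x z
    obtain ⟨y, hy, hu⟩ := hli x z
    refine ⟨f.symm y, ?_, ?_⟩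
    · simp only [TR, Equiv.apply_symm_apply]; exact hy
    · intro y' hy'
      simp only [TR] at hy'
      have := hu (f y') hy'
      simp [← this]
  · -- right invertibility
    intro y w
    obtain ⟨x, hx, hu⟩ := hri y w
    refine ⟨f x, ?_, ?_⟩
    · simp only [TR, Equiv.symm_apply_apply]; exact hx
    · intro x' hx'
      simp only [TR] at hx'
      have := hu (f.symm x') hx'
      simp [← this]
  · -- type I
    intro a
    obtain ⟨u, hu, huu⟩ := hI a
    refine ⟨f u, ?_, ?_⟩
    · show TR f R (f u, a) = (f u, a)
      rw [hTRp]
      simp only [Equiv.symm_apply_apply, hu]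
    · intro x hx
      have hx : TR f R (x, a) = (x, a) := hx
      rw [hTRp] at hx
      have h1 : (R (f.symm x, a)).1 = f.symm x := by
        have := congrArg Prod.fst hx
        simp only at this
        have : f (R (f.symm x, a)).1 = x := this
        calc (R (f.symm x, a)).1 = f.symm (f (R (f.symm x, a)).1) := by simp
        _ = f.symm x := by rw [this]
      have h2 : (R (f.symm x, a)).2 = a := congrArg Prod.snd hx
      have := huu (f.symm x) (Prod.ext h1 h2)
      simp [← this]

end TwistedYB
end

section
/- Let (X,f,R) be a twisted Yang-Baxter set, M a module over ℤ[T,T⁻¹], and φ_1, φ_2: X×X → M maps satisfying φ_i(f(x), f(y)) = T·φ_i(x,y) for i = 1,2. Fix integers m_1, m_2 and define S on V×V, where V = M×X, by S((a,x),(b,y)) = ((b + T^{m_1}φ_1(x,y), R_1(x,y)), (a + T^{m_2}φ_2(x,y), R_2(x,y))). If S satisfies the set-theoretic Yang-Baxter equation, then φ := T^{m_1}φ_1 + T^{m_2}φ_2 is a 2-cocycle, i.e., for all x,y,z ∈ X: φ(R_2(x,y), z) + φ(R_1(x,y), R_1(R_2(x,y), z)) + φ(x,y) = φ(y,z) + φ(x,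 R_1(y,z)) + φ(R_2(x, R_1(y,z)), R_2(y,z)). -/
namespace TwistedYB

variable {X : Type*}

open LaurentPolynomial in
/-- Extension theory: if the extension map `S` on `V = M × X` is a Yang-Baxter
operator, then `φ = T^{m₁}φ₁ + T^{m₂}φ₂` is a 2-cocycle. -/
theorem extension_cocycle (R : X × X → X × X) (f : X ≃ X)
    (hbij : Function.Bijective R) (hYB : YBE R)
    (hcomm : ∀ p : X × X, R (f p.1, f p.2) = (f (R p).1, f (R p).2))
    (M : Type*) [AddCommGroup M] [Module (LaurentPolynomial ℤ) M]
    (φ₁ φ₂ : X × X → M)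
    (hφ₁ : ∀ p : X × X, φ₁ (f p.1, f p.2) = (T 1 : ℤ[T;T⁻¹]) • φ₁ p)
    (hφ₂ : ∀ p : X × X, φ₂ (f p.1, f p.2) = (T 1 : ℤ[T;T⁻¹]) • φ₂ p)
    (m₁ m₂ : ℤ)
    (S : (M × X) × (M × X) → (M × X) × (M × X))
    (hS : ∀ (a b : M) (x y : X), S ((a, x), (b, y)) =
      ((b + (T m₁ : ℤ[T;T⁻¹]) • φ₁ (x, y), (R (x, y)).1),
       (a + (T m₂ : ℤ[T;T⁻¹]) • φ₂ (x, y), (R (x, y)).2)))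
    (hSYB : YBE S)
    (φ : X × X → M)
    (hφ : ∀ p : X × X, φ p = (T m₁ : ℤ[T;T⁻¹]) • φ₁ p + (T m₂ : ℤ[T;T⁻¹]) • φ₂ p) :
    ∀ x y z : X,
      φ ((R (x, y)).2, z) + φ ((R (x, y)).1, (R ((R (x, y)).2, z)).1) + φ (x, y)
        = φ (y, z) + φ (x, (R (y, z)).1)
            + φ ((R (x, (R (y, z)).1)).2, (R (y, z)).2) := by
  intro x y z
  have h := congrFun hSYB (((0 : M), x), ((0 : M), y), ((0 : M), z))
  simp only [Rxx, xxR, Function.comp_apply, hS, Prod.mk.injEq] at h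
  obtain ⟨⟨h1, -⟩, ⟨h2, -⟩, ⟨h3, -⟩⟩ := h
  simp only [zero_add, add_zero] at h1 h2 h3
  simp only [hφ]
  have := congrArg₂ (· + ·) (congrArg₂ (· + ·) h1 h2) h3
  abel_nf at this ⊢
  linear_combination (norm := abel) this

end TwistedYB
end
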